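/- Let g ≥ 2 be an integer and let k ≥ 0 be an integer. Then l_g(g^{2+k} · (2g+1)) ≤ k + 5; indeed 1, 2, 2g, 2g+1, 2g^2+g, ..., 2g^{3+k}+g^{2+k} is a g-addition chain of length k + 5 for g^{2+k}(2g+1). -/

import Mathlib

/-- `IsGAddChain g a r d` says that `a 0 = 1, a 1, …, a r = d` is a `g`-addition chain
for `d`: each term `a i` (for `1 ≤ i ≤ r`) is a sum `a (j 1) + ⋯ + a (j k)` of `k`
earlier terms, where `2 ≤ k ≤ g` and `j 1 ≤ ⋯ ≤ j k ≤ i - 1`. -/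
def IsGAddChain (g : ℕ) (a : ℕ → ℕ) (r : ℕ) (d : ℕ) : Prop :=
  a 0 = 1 ∧ a r = d ∧
  ∀ i, 1 ≤ i → i ≤ r →
    ∃ k, 2 ≤ k ∧ k ≤ g ∧
      ∃ j : Fin k → ℕ, Monotone j ∧ (∀ t, j t ≤ i - 1) ∧
        a i = ∑ t, a (j t)

/-- `gAddChainLength g d` is `l_g(d)`, the length of a shortest `g`-addition chain for `d`. -/
noncomputable def gAddChainLength (g d : ℕ) : ℕ :=
  sInf {r | ∃ a : ℕ → ℕ, IsGAddChain g a r d}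

/-- `nonzeroDigits m d` is `μ_m(d)`, the number of nonzero digits of `d` in base `m`. -/
def nonzeroDigits (m d : ℕ) : ℕ :=
  ((Nat.digits m d).filter (· ≠ 0)).length

theorem gAddChainLength_le {g : ℕ} {a : ℕ → ℕ} {r d : ℕ} (h : IsGAddChain g a r d) :
    gAddChainLength g d ≤ r :=
  Nat.sInf_le ⟨a, h⟩

def IsGSumOfEarlier (g : ℕ) (a : ℕ → ℕ) (i : ℕ) : Prop :=
  ∃ k, 2 ≤ k ∧ k ≤ g ∧
    ∃ j : Fin k → ℕ, Monotone j ∧ (∀ t, j t ≤ i - 1) ∧ a i = ∑ t, a (j t)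

section IsGSumOfEarlier

variable {g : ℕ} {a : ℕ → ℕ} {i : ℕ}

theorem isGSumOfEarlier_of_eq_mul {k j : ℕ} (hk : 2 ≤ k) (hkg : k ≤ g) (hj : j < i)
    (h : a i = k * a j) : IsGSumOfEarlier g a i :=
  ⟨k, hk, hkg, fun _ => j, monotone_const, fun _ => Nat.le_sub_one_of_lt hj, by simp [h]⟩

theorem isGSumOfEarlier_of_eq_add {j₁ j₂ : ℕ} (hg : 2 ≤ g) (hj : j₁ ≤ j₂) (hj₂ : j₂ < i)
    (h : a i = a j₁ + a j₂) : IsGSumOfEarlier g a i := by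
  refine ⟨2, le_rfl, hg, ![j₁, j₂], ?_, ?_, by simp [h]⟩
  · intro s t hst
    fin_cases s <;> fin_cases t <;> simp_all
  · intro t
    fin_cases t <;> simp <;> omega

end IsGSumOfEarlier

def garyChain (g : ℕ) : ℕ → ℕ
  | 0 => 1
  | 1 => 2
  | 2 => 2 * g
  | n + 3 => g ^ n * (2 * g + 1)

theorem isGAddChain_garyChain {g : ℕ} (hg : 2 ≤ g) (n : ℕ) :
    IsGAddChain g (garyChain g) (n + 3) (g ^ n * (2 * g + 1)) := by
  refine ⟨rfl, rfl, fun i hi _ => ?_⟩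
  change IsGSumOfEarlier g (garyChain g) i
  match i, hi with
  | 1, _ => exact isGSumOfEarlier_of_eq_mul (j := 0) le_rfl hg one_pos rfl
  | 2, _ => exact isGSumOfEarlier_of_eq_mul (j := 1) hg le_rfl one_lt_two (mul_comm 2 g)
  | 3, _ =>
    exact isGSumOfEarlier_of_eq_add (j₁ := 0) (j₂ := 2) hg zero_le_two (by norm_num)
      (by simp only [garyChain]; ring)
  | m + 4, _ =>
    exact isGSumOfEarlier_of_eq_mul (j := m + 3) hg le_rfl (by omega)
      (by simp only [garyChain]; ring)

/-- for integers `g ≥ 2` and `k ≥ 0`,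
`l_g(g ^ (2 + k) * (2 g + 1)) ≤ k + 5`. -/
theorem gAddChainLength_gary_bound (g k : ℕ) (hg : 2 ≤ g) :
    gAddChainLength g (g ^ (2 + k) * (2 * g + 1)) ≤ k + 5 := by
  have h := gAddChainLength_le (isGAddChain_garyChain hg (2 + k))
  omega
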